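/- Score matching equivalence: let s̃: ℂ^N → ℂ^N satisfy the mirror symmetry s̃(z)_κ = conj(s̃(z)_{N−κ}), and define s'(x) = U* s̃(Ux) for x ∈ ℝ^N. Then s'(x) ∈ ℝ^N (it is real-valued), and for any target g ∈ ℝ^N and its transformed target g̃ = φ^{-1}[Q g] one has ‖s'(x) − Qᵀ h‖² = ‖s̃(Ux) − Λ² φ^{-1}[h]‖² for all h ∈ ℝ^N, where Λ² φ^{-1}[h] = φ^{-1}[Λ² h]. In particular the frequency-domain squared loss against Λ²-scaled scores equals the time-domain squared loss. -/

import Mathlib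

open Complex Matrix Finset

noncomputable def dftMatrix (N : ℕ) : Matrix (Fin N) (Fin N) ℂ :=
  fun κ τ => (1 / Real.sqrt N : ℝ) *
    Complex.exp (-(2 * Real.pi * Complex.I * (κ : ℕ) * (τ : ℕ)) / N)

noncomputable def phi (N : ℕ) (z : Fin N → ℂ) (j : Fin N) : ℝ :=
  if (j : ℕ) ≤ N / 2 then (z j).re
  else (z ⟨(j : ℕ) - N / 2, lt_of_le_of_lt (Nat.sub_le _ _) j.isLt⟩).im

noncomputable def phiInv (N : ℕ) (y : Fin N → ℝ) (κ : Fin N) : ℂ :=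
  if h : (κ : ℕ) ≤ N / 2 then
    if h0 : (κ : ℕ) = 0 ∨ 2 * (κ : ℕ) = N then (y κ : ℂ)
    else ⟨y κ, y ⟨(κ : ℕ) + N / 2, by
      have hlt := κ.isLt; simp only [not_or] at h0; omega⟩⟩
  else
    ⟨y ⟨N - (κ : ℕ), by have hlt := κ.isLt; omega⟩,
     -(y ⟨N - (κ : ℕ) + N / 2, by
        have hlt := κ.isLt; simp only [not_le] at h; omega⟩)⟩

noncomputable def Lambda (N : ℕ) : Matrix (Fin N) (Fin N) ℝ :=
  Matrix.diagonal fun κ => if (κ : ℕ) = 0 ∨ 2 * (κ : ℕ) = N then 1 else 1 / Real.sqrt 2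

/-!
Entrywise `U κ τ = N^{-1/2} ω^{κτ}` for a primitive `N`-th root of unity `ω`, so orthogonality of
characters gives `U U* = 1` and `conj (U κ τ) = U (-κ) τ`. Hence `U` maps real vectors to
mirror-symmetric ones and `U*` maps mirror-symmetric vectors to real ones. Taking real and
imaginary parts of the orthogonality relations gives `Q Qᵀ = Λ²`. As `φ⁻¹ ∘ φ` is the identity on
mirror-symmetric vectors, `U Qᵀ h = φ⁻¹[φ(U Qᵀ h)] = φ⁻¹[Q Qᵀ h] = φ⁻¹[Λ² h]`, and the loss
identity is the unitarity of `U*` applied to `s̃(Ux) - U Qᵀ h`.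
-/

section

variable {N : ℕ}

lemma Fin.val_neg_of_ne_zero {κ : Fin N} (hκ : (κ : ℕ) ≠ 0) : ((-κ : Fin N) : ℕ) = N - κ := by
  rw [Fin.val_neg']
  exact Nat.mod_eq_of_lt (by have := κ.isLt; omega)

lemma Fin.add_eq_zero_iff_val [NeZero N] {a b : Fin N} :
    a + b = 0 ↔ (a : ℕ) + b = 0 ∨ (a : ℕ) + b = N := by
  have ha := a.isLt
  have hb := b.isLt
  rw [Fin.ext_iff, Fin.val_add, Fin.val_zero]
  rcases Nat.lt_or_ge ((a : ℕ) + b) N with hlt | hge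
  · rw [Nat.mod_eq_of_lt hlt]; omega
  · rw [Nat.mod_eq_sub_mod hge, Nat.mod_eq_of_lt (by omega)]; omega

lemma IsPrimitiveRoot.pow_val_add {K : Type*} [CommMonoid K] {ω : K} (hω : IsPrimitiveRoot ω N)
    (a b : Fin N) : ω ^ ((a + b : Fin N) : ℕ) = ω ^ (a : ℕ) * ω ^ (b : ℕ) := by
  have hmod := pow_mod_orderOf ω ((a : ℕ) + b)
  rw [← hω.eq_orderOf] at hmod
  rw [Fin.val_add, hmod, pow_add]

lemma IsPrimitiveRoot.sum_pow_val_pow [NeZero N] {K : Type*} [Field K] {ω : K}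
    (hω : IsPrimitiveRoot ω N) (c : Fin N) :
    ∑ τ : Fin N, (ω ^ (c : ℕ)) ^ (τ : ℕ) = if c = 0 then (N : K) else 0 := by
  rw [Fin.sum_univ_eq_sum_range (fun τ => (ω ^ (c : ℕ)) ^ τ)]
  split_ifs with hc
  · simp [hc]
  · have hne : ω ^ (c : ℕ) ≠ 1 := by
      rw [Ne, hω.pow_eq_one_iff_dvd]
      exact fun hdvd => hc (Fin.ext (by simpa using Nat.eq_zero_of_dvd_of_lt hdvd c.isLt))
    rw [geom_sum_eq hne, ← pow_mul, mul_comm, pow_mul, hω.pow_eq_one, one_pow, sub_self,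
      zero_div]

noncomputable def dftRoot (N : ℕ) : ℂ := Complex.exp (-(2 * Real.pi * Complex.I) / N)

lemma isPrimitiveRoot_dftRoot [NeZero N] : IsPrimitiveRoot (dftRoot N) N := by
  rw [dftRoot, neg_div, Complex.exp_neg]
  exact (Complex.isPrimitiveRoot_exp N (NeZero.ne N)).inv

lemma dftMatrix_apply (κ τ : Fin N) :
    dftMatrix N κ τ = ((Real.sqrt N)⁻¹ : ℝ) * (dftRoot N ^ (κ : ℕ)) ^ (τ : ℕ) := by
  rw [dftMatrix, dftRoot, ← pow_mul, ← Complex.exp_nat_mul, one_div]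
  push_cast
  ring_nf

lemma sum_dftMatrix_mul_dftMatrix [NeZero N] (a b : Fin N) :
    ∑ τ, dftMatrix N a τ * dftMatrix N b τ = if a + b = 0 then 1 else 0 := by
  have hω := isPrimitiveRoot_dftRoot (N := N)
  have hsq : (((Real.sqrt N)⁻¹ : ℝ) : ℂ) * (((Real.sqrt N)⁻¹ : ℝ) : ℂ) = (N : ℂ)⁻¹ := by
    rw [← Complex.ofReal_mul, ← mul_inv, Real.mul_self_sqrt (Nat.cast_nonneg N)]
    push_cast; rfl
  have hterm : ∀ τ : Fin N, dftMatrix N a τ * dftMatrix N b τ =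
      (N : ℂ)⁻¹ * (dftRoot N ^ ((a + b : Fin N) : ℕ)) ^ (τ : ℕ) := by
    intro τ
    rw [dftMatrix_apply, dftMatrix_apply, mul_mul_mul_comm, hsq, ← mul_pow, hω.pow_val_add]
  rw [Finset.sum_congr rfl fun τ _ => hterm τ, ← Finset.mul_sum, hω.sum_pow_val_pow]
  split_ifs
  · exact inv_mul_cancel₀ (Nat.cast_ne_zero.2 (NeZero.ne N))
  · exact mul_zero _

lemma conj_dftMatrix [NeZero N] (κ τ : Fin N) :
    starRingEnd ℂ (dftMatrix N κ τ) = dftMatrix N (-κ) τ := by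
  have hω := isPrimitiveRoot_dftRoot (N := N)
  have hconj : starRingEnd ℂ (dftRoot N ^ (κ : ℕ)) = dftRoot N ^ ((-κ : Fin N) : ℕ) := by
    rw [map_pow, ← Complex.inv_eq_conj (Complex.norm_eq_one_of_pow_eq_one hω.pow_eq_one
      (NeZero.ne N)), inv_pow, inv_eq_of_mul_eq_one_right]
    rw [← hω.pow_val_add, add_neg_cancel, Fin.val_zero, pow_zero]
  rw [dftMatrix_apply, dftMatrix_apply, map_mul, map_pow, hconj, Complex.conj_ofReal]

lemma dftMatrix_mul_conjTranspose [NeZero N] : dftMatrix N * (dftMatrix N)ᴴ = 1 := by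
  ext a b
  simp only [Matrix.mul_apply, Matrix.conjTranspose_apply, RCLike.star_def, conj_dftMatrix,
    sum_dftMatrix_mul_dftMatrix, add_neg_eq_zero, Matrix.one_apply]

-- `-κ : Fin N` is `(N - κ) % N`: the mirror index `N - κ`, with `-0 = 0`.
def IsMirrorSymmetric (z : Fin N → ℂ) : Prop := ∀ κ, z κ = starRingEnd ℂ (z (-κ))

lemma isMirrorSymmetric_dftMatrix_mulVec [NeZero N] (x : Fin N → ℝ) :
    IsMirrorSymmetric (dftMatrix N *ᵥ fun τ => (x τ : ℂ)) := by
  intro κ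
  simp only [Matrix.mulVec, dotProduct, map_sum, map_mul, Complex.conj_ofReal, conj_dftMatrix,
    neg_neg]

lemma IsMirrorSymmetric.im_conjTranspose_dftMatrix_mulVec [NeZero N] {w : Fin N → ℂ}
    (hw : IsMirrorSymmetric w) (τ : Fin N) : (((dftMatrix N)ᴴ *ᵥ w) τ).im = 0 := by
  rw [← Complex.conj_eq_iff_im]
  simp only [Matrix.mulVec, dotProduct, Matrix.conjTranspose_apply, RCLike.star_def, map_sum,
    map_mul, Complex.conj_conj]
  rw [← Equiv.sum_comp (Equiv.neg (Fin N))]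
  refine Finset.sum_congr rfl fun κ _ => ?_
  rw [Equiv.neg_apply, ← conj_dftMatrix, ← hw]

lemma IsMirrorSymmetric.phiInv_phi {z : Fin N → ℂ} (hz : IsMirrorSymmetric z) :
    phiInv N (phi N z) = z := by
  funext κ
  have hκ := κ.isLt
  unfold phiInv
  split_ifs with hlow hedge
  · have hneg : -κ = κ := by
      ext
      rcases hedge with h | h
      · rw [Fin.val_neg', h, Nat.sub_zero, Nat.mod_self]
      · rw [Fin.val_neg_of_ne_zero (by omega)]; omega
    have him : (z κ).im = 0 := by
      have hself := hz κ
      rw [hneg] at hself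
      exact Complex.conj_eq_iff_im.1 hself.symm
    simp only [phi, if_pos hlow]
    exact Complex.ext (by simp) (by simp [him])
  · have hshift : (⟨(κ : ℕ) + N / 2 - N / 2, by omega⟩ : Fin N) = κ := Fin.ext (by simp)
    simp only [phi, if_pos hlow, if_neg (show ¬((κ : ℕ) + N / 2 ≤ N / 2) by omega), hshift]
  · have hmirror : (⟨N - κ, by omega⟩ : Fin N) = -κ :=
      Fin.ext (Fin.val_neg_of_ne_zero (by omega)).symm
    have hshift : (⟨N - κ + N / 2 - N / 2, by omega⟩ : Fin N) = -κ := by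
      rw [← hmirror]; exact Fin.ext (by simp)
    simp only [phi, if_pos (show N - (κ : ℕ) ≤ N / 2 by omega),
      if_neg (show ¬(N - (κ : ℕ) + N / 2 ≤ N / 2) by omega), hmirror, hshift]
    rw [hz κ]
    rfl

section RealParts

variable [NeZero N] (a b : Fin N)

lemma sum_dftMatrix_mul_conj_dftMatrix :
    ∑ τ, dftMatrix N a τ * starRingEnd ℂ (dftMatrix N b τ) = if a = b then 1 else 0 := by
  simp only [conj_dftMatrix, sum_dftMatrix_mul_dftMatrix, add_neg_eq_zero]

lemma sum_re_mul_re_dftMatrix :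
    ∑ τ, (dftMatrix N a τ).re * (dftMatrix N b τ).re =
      ((if a = b then 1 else 0) + (if a + b = 0 then 1 else 0)) / 2 := by
  calc _ = ((∑ τ, dftMatrix N a τ * starRingEnd ℂ (dftMatrix N b τ)).re +
        (∑ τ, dftMatrix N a τ * dftMatrix N b τ).re) / 2 := by
        simp only [Complex.re_sum, Complex.mul_re, Complex.conj_re, Complex.conj_im,
          ← Finset.sum_add_distrib, Finset.sum_div]
        ring_nf
    _ = _ := by
        rw [sum_dftMatrix_mul_dftMatrix, sum_dftMatrix_mul_conj_dftMatrix]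
        split_ifs <;> norm_num

lemma sum_im_mul_im_dftMatrix :
    ∑ τ, (dftMatrix N a τ).im * (dftMatrix N b τ).im =
      ((if a = b then 1 else 0) - (if a + b = 0 then 1 else 0)) / 2 := by
  calc _ = ((∑ τ, dftMatrix N a τ * starRingEnd ℂ (dftMatrix N b τ)).re -
        (∑ τ, dftMatrix N a τ * dftMatrix N b τ).re) / 2 := by
        simp only [Complex.re_sum, Complex.mul_re, Complex.conj_re, Complex.conj_im,
          ← Finset.sum_sub_distrib, Finset.sum_div]
        ring_nf
    _ = _ := by
        rw [sum_dftMatrix_mul_dftMatrix, sum_dftMatrix_mul_conj_dftMatrix]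
        split_ifs <;> norm_num

lemma sum_re_mul_im_dftMatrix :
    ∑ τ, (dftMatrix N a τ).re * (dftMatrix N b τ).im = 0 := by
  calc _ = ((∑ τ, dftMatrix N a τ * dftMatrix N b τ).im -
        (∑ τ, dftMatrix N a τ * starRingEnd ℂ (dftMatrix N b τ)).im) / 2 := by
        simp only [Complex.im_sum, Complex.mul_im, Complex.conj_re, Complex.conj_im,
          ← Finset.sum_sub_distrib, Finset.sum_div]
        ring_nf
    _ = _ := by
        rw [sum_dftMatrix_mul_dftMatrix, sum_dftMatrix_mul_conj_dftMatrix]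
        split_ifs <;> norm_num

lemma sum_im_mul_re_dftMatrix :
    ∑ τ, (dftMatrix N a τ).im * (dftMatrix N b τ).re = 0 := by
  simp_rw [mul_comm (dftMatrix N a _).im]
  exact sum_re_mul_im_dftMatrix b a

end RealParts

-- The matrix `Q` of the paper: its column `τ` is `φ(U e_τ)`.
noncomputable def dftRealMatrix (N : ℕ) : Matrix (Fin N) (Fin N) ℝ :=
  Matrix.of fun j τ => phi N (fun κ => dftMatrix N κ τ) j

lemma eq_dftRealMatrix_of_mulVec {Q : Matrix (Fin N) (Fin N) ℝ}
    (hQ : ∀ x : Fin N → ℝ, Q *ᵥ x = phi N (dftMatrix N *ᵥ fun τ => (x τ : ℂ))) :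
    Q = dftRealMatrix N := by
  ext j τ
  have hcol := congrFun (hQ (Pi.single τ 1)) j
  have hcast : (fun t => (((Pi.single τ 1 : Fin N → ℝ) t : ℝ) : ℂ)) = Pi.single τ 1 := by
    funext t
    by_cases ht : t = τ <;> simp [ht]
  rw [Matrix.mulVec_single_one, hcast, Matrix.mulVec_single_one] at hcol
  exact hcol

lemma Lambda_mul_Lambda_apply (j k : Fin N) :
    (Lambda N * Lambda N) j k =
      if j = k then (if (j : ℕ) = 0 ∨ 2 * (j : ℕ) = N then 1 else 1 / 2) else 0 := by
  rw [Lambda, Matrix.diagonal_mul_diagonal, Matrix.diagonal_apply]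
  split_ifs with hjk hedge
  · norm_num
  · rw [one_div, ← mul_inv, Real.mul_self_sqrt zero_le_two, one_div]
  · rfl

lemma dftRealMatrix_mul_transpose [NeZero N] :
    dftRealMatrix N * (dftRealMatrix N)ᵀ = Lambda N * Lambda N := by
  ext j k
  have hj := j.isLt
  have hk := k.isLt
  rw [Lambda_mul_Lambda_apply, Matrix.mul_apply]
  simp only [Matrix.transpose_apply, dftRealMatrix, Matrix.of_apply, phi]
  by_cases hjlow : (j : ℕ) ≤ N / 2 <;> by_cases hklow : (k : ℕ) ≤ N / 2 <;>
    simp only [hjlow, hklow, if_true, if_false, sum_re_mul_re_dftMatrix, sum_im_mul_im_dftMatrix,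
      sum_re_mul_im_dftMatrix, sum_im_mul_re_dftMatrix, Fin.add_eq_zero_iff_val] <;>
    simp only [Fin.ext_iff] <;>
    split_ifs <;> (try norm_num) <;> omega

lemma dftMatrix_mulVec_transpose [NeZero N] {Q : Matrix (Fin N) (Fin N) ℝ}
    (hQ : ∀ x : Fin N → ℝ, Q *ᵥ x = phi N (dftMatrix N *ᵥ fun τ => (x τ : ℂ)))
    (v : Fin N → ℝ) :
    (dftMatrix N *ᵥ fun τ => ((Qᵀ *ᵥ v) τ : ℂ)) = phiInv N ((Lambda N * Lambda N) *ᵥ v) := by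
  rw [← (isMirrorSymmetric_dftMatrix_mulVec _).phiInv_phi, ← hQ, Matrix.mulVec_mulVec,
    eq_dftRealMatrix_of_mulVec hQ, dftRealMatrix_mul_transpose]

section Unitary

variable {n : Type*} [Fintype n] [DecidableEq n] {M : Matrix n n ℂ}

lemma sum_norm_sq_mulVec_of_conjTranspose_mul_self (hM : Mᴴ * M = 1) (v : n → ℂ) :
    ∑ i, ‖(M *ᵥ v) i‖ ^ 2 = ∑ i, ‖v i‖ ^ 2 := by
  have hsq : ∀ w : n → ℂ, star w ⬝ᵥ w = ((∑ i, ‖w i‖ ^ 2 : ℝ) : ℂ) := fun w => by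
    rw [Complex.ofReal_sum]
    exact Finset.sum_congr rfl fun i _ => by
      rw [Pi.star_apply, RCLike.star_def, mul_comm, Complex.mul_conj, Complex.normSq_eq_norm_sq]
  have hdot : star (M *ᵥ v) ⬝ᵥ (M *ᵥ v) = star v ⬝ᵥ v := by
    rw [Matrix.star_mulVec, ← Matrix.dotProduct_mulVec, Matrix.mulVec_mulVec, hM,
      Matrix.one_mulVec]
  rw [hsq, hsq] at hdot
  exact_mod_cast hdot

lemma sum_norm_sq_conjTranspose_mulVec_sub (hM : M * Mᴴ = 1) (w v : n → ℂ) :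
    ∑ i, ‖(Mᴴ *ᵥ w) i - v i‖ ^ 2 = ∑ i, ‖w i - (M *ᵥ v) i‖ ^ 2 := by
  have hv : Mᴴ *ᵥ (M *ᵥ v) = v := by
    rw [Matrix.mulVec_mulVec, mul_eq_one_comm.mp hM, Matrix.one_mulVec]
  have hMstar : (Mᴴ)ᴴ * Mᴴ = 1 := by rw [Matrix.conjTranspose_conjTranspose, hM]
  conv_lhs => rw [← hv]
  simpa only [Matrix.mulVec_sub, Pi.sub_apply] using
    sum_norm_sq_mulVec_of_conjTranspose_mul_self hMstar (w - M *ᵥ v)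

end Unitary

end

/-- score matching equivalence: if `s̃ : ℂ^N → ℂ^N` satisfies the mirror
symmetry `s̃(z)_κ = conj(s̃(z)_{N−κ})`, and `s'(x) := U* s̃(Ux)`, then `s'` is real-valued
and, for all `x ∈ ℝ^N` and `h ∈ ℝ^N`,
`‖s'(x) − Qᵀ h‖² = ‖s̃(Ux) − φ⁻¹[Λ² h]‖²`: the frequency-domain squared score-matching
loss against `Λ²`-scaled targets equals the time-domain squared loss. -/
theorem score_matching_equivalence (N : ℕ) (hN : 0 < N)
    (Q : Matrix (Fin N) (Fin N) ℝ)
    (hQ : ∀ x : Fin N → ℝ, Q *ᵥ x = phi N (dftMatrix N *ᵥ fun τ => (x τ : ℂ)))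
    (stilde : (Fin N → ℂ) → (Fin N → ℂ))
    (hsym : ∀ z : Fin N → ℂ, ∀ κ : Fin N,
      stilde z κ = starRingEnd ℂ (stilde z ⟨(N - (κ : ℕ)) % N, Nat.mod_lt _ κ.pos⟩)) :
    (∀ x : Fin N → ℝ, ∀ κ : Fin N,
      (((dftMatrix N)ᴴ *ᵥ stilde (dftMatrix N *ᵥ fun τ => (x τ : ℂ))) κ).im = 0) ∧
    (∀ x h : Fin N → ℝ,
      ∑ κ : Fin N,
        ‖((dftMatrix N)ᴴ *ᵥ stilde (dftMatrix N *ᵥ fun τ => (x τ : ℂ))) κ -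
          ((Qᵀ *ᵥ h) κ : ℂ)‖ ^ 2 =
      ∑ κ : Fin N,
        ‖stilde (dftMatrix N *ᵥ fun τ => (x τ : ℂ)) κ -
          phiInv N ((Lambda N * Lambda N) *ᵥ h) κ‖ ^ 2) := by
  have : NeZero N := ⟨hN.ne'⟩
  refine ⟨fun x => IsMirrorSymmetric.im_conjTranspose_dftMatrix_mulVec (hsym _),
    fun x h => ?_⟩
  rw [← dftMatrix_mulVec_transpose hQ h]
  exact sum_norm_sq_conjTranspose_mulVec_sub dftMatrix_mul_conjTranspose _ _
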